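/- Let p ≤ n be positive integers, let G, M ∈ ℍ^{n×n} be Hermitian positive definite (so M is invertible), let X ∈ ℍ^{n×p} satisfy XᴴGX = I_p, let Y ∈ ℍ^{n×p} be arbitrary, and suppose S ∈ ℍ^{p×p} is Hermitian and satisfies her(XᴴG M⁻¹ G X S) = her(XᴴGY). Define Z := Y − M⁻¹GXS. Then: (i) ZᴴGX + XᴴGZ = 0, and (ii) re(tr(ξᴴM(Y − Z))) = 0 for every ξ ∈ ℍ^{n×p} with ξᴴGX + XᴴGξ = 0. That is, Z is the orthogonal projection of Y onto the tangent space at X with respect to the inner product ⟨ξ,η⟩ = re(tr(ξᴴMη)). -/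

import Mathlib

/-!
Write `C ξ = XᴴGξ`; since `G` is Hermitian, `ξᴴGX + XᴴGξ = (C ξ)ᴴ + C ξ`, so tangency means that
`C ξ` is skew-Hermitian. For `Z` one has `C Z = XᴴGY − XᴴGM⁻¹GXS`, and the Sylvester equation for `S`
says precisely that this is skew-Hermitian. On the other side `ξᴴM(Y − Z) = ξᴴGX·S` is a product
of a skew-Hermitian and a Hermitian matrix, and `re ∘ tr` is invariant under both cyclic
permutation and conjugate transposition, which forces its value to equal its own negative.
-/

open Matrix
open scoped Quaternion

noncomputable def her {p : ℕ} (A : Matrix (Fin p) (Fin p) ℍ[ℝ]) : Matrix (Fin p) (Fin p) ℍ[ℝ] :=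
  (2⁻¹ : ℝ) • (A + Aᴴ)

namespace Quaternion

variable {R : Type*} [CommRing R]

lemma re_mul_comm (a b : ℍ[R]) : (a * b).re = (b * a).re := by
  simp only [re_mul]
  ring

lemma re_sum {ι : Type*} (s : Finset ι) (f : ι → ℍ[R]) :
    (∑ i ∈ s, f i).re = ∑ i ∈ s, (f i).re :=
  map_sum (QuaternionAlgebra.reₗ _ _ _) f s

end Quaternion

namespace Matrix

section QuaternionTrace

variable {R : Type*} [CommRing R] {l m : Type*} [Fintype l] [Fintype m]

lemma re_trace_mul_comm (A : Matrix l m ℍ[R]) (B : Matrix m l ℍ[R]) :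
    (A * B).trace.re = (B * A).trace.re := by
  simp only [trace, diag, mul_apply, Quaternion.re_sum]
  rw [Finset.sum_comm]
  simp only [Quaternion.re_mul_comm]

lemma re_trace_conjTranspose (A : Matrix m m ℍ[R]) : Aᴴ.trace.re = A.trace.re := by
  rw [trace_conjTranspose, Quaternion.re_star]

lemma re_trace_mul_eq_zero_of_conjTranspose_eq_neg [IsAddTorsionFree R] {A S : Matrix m m ℍ[R]}
    (hA : Aᴴ = -A) (hS : S.IsHermitian) : (A * S).trace.re = 0 := by
  refine self_eq_neg.mp ?_
  calc (A * S).trace.re = (A * S)ᴴ.trace.re := (re_trace_conjTranspose _).symm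
    _ = -(S * A).trace.re := by
      rw [conjTranspose_mul, hS.eq, hA, mul_neg, trace_neg, Quaternion.re_neg]
    _ = -(A * S).trace.re := by rw [re_trace_mul_comm]

end QuaternionTrace

lemma conjTranspose_mul_mul_of_isHermitian {α : Type*} [Semiring α] [StarRing α]
    {l m k : Type*} [Fintype m] {G : Matrix m m α} (hG : G.IsHermitian)
    (A : Matrix m l α) (B : Matrix m k α) : (Aᴴ * G * B)ᴴ = Bᴴ * G * A := by
  rw [conjTranspose_mul, conjTranspose_mul, hG.eq, conjTranspose_conjTranspose, Matrix.mul_assoc]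

end Matrix

lemma add_conjTranspose_eq_of_her_eq {p : ℕ} {A B : Matrix (Fin p) (Fin p) ℍ[ℝ]}
    (h : her A = her B) : A + Aᴴ = B + Bᴴ :=
  smul_right_injective _ (by norm_num) h

theorem projection_generalized_quaternionic_stiefel_general (n p : ℕ)
    (G M : Matrix (Fin n) (Fin n) ℍ[ℝ]) (hG : Gᴴ = G)
    [Invertible M]
    (X : Matrix (Fin n) (Fin p) ℍ[ℝ])
    (Y : Matrix (Fin n) (Fin p) ℍ[ℝ])
    (S : Matrix (Fin p) (Fin p) ℍ[ℝ]) (hSherm : Sᴴ = S)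
    (hS : her (Xᴴ * G * ⅟M * G * X * S) = her (Xᴴ * G * Y))
    (Z : Matrix (Fin n) (Fin p) ℍ[ℝ]) (hZ : Z = Y - ⅟M * G * X * S) :
    Zᴴ * G * X + Xᴴ * G * Z = 0 ∧
      ∀ ξ : Matrix (Fin n) (Fin p) ℍ[ℝ], ξᴴ * G * X + Xᴴ * G * ξ = 0 →
        ((ξᴴ * (M * (Y - Z))).trace).re = 0 := by
  refine ⟨?_, fun ξ hξ => ?_⟩
  · set A := Xᴴ * G * ⅟M * G * X * S
    have hXGZ : Xᴴ * G * Z = Xᴴ * G * Y - A := by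
      simp only [A, hZ, Matrix.mul_sub, Matrix.mul_assoc]
    rw [← conjTranspose_mul_mul_of_isHermitian hG X Z, hXGZ, conjTranspose_sub]
    calc _ = (Xᴴ * G * Y + (Xᴴ * G * Y)ᴴ) - (A + Aᴴ) := by abel
      _ = 0 := by rw [add_conjTranspose_eq_of_her_eq hS, sub_self]
  · have hpair : ξᴴ * (M * (Y - Z)) = (ξᴴ * G * X) * S := by
      rw [hZ, sub_sub_cancel]
      simp only [← Matrix.mul_assoc]
      rw [Matrix.mul_invOf_cancel_right]
    have hskew : (ξᴴ * G * X)ᴴ = -(ξᴴ * G * X) := by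
      rw [conjTranspose_mul_mul_of_isHermitian hG ξ X]
      exact eq_neg_of_add_eq_zero_right hξ
    rw [hpair]
    exact re_trace_mul_eq_zero_of_conjTranspose_eq_neg hskew hSherm

/-- If the Hermitian `S` solves the Sylvester equation
`her(XᴴG M⁻¹ G X S) = her(XᴴGY)`, then `Z = Y − M⁻¹GXS` is the orthogonal projection
of `Y` onto the tangent space at `X`: `Z` is tangent and `Y − Z` is orthogonal to
every tangent vector with respect to `⟨ξ,η⟩ = re(tr(ξᴴMη))`. -/
theorem projection_generalized_quaternionic_stiefel (n p : ℕ) (hp : 0 < p) (hpn : p ≤ n)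
    (G M : Matrix (Fin n) (Fin n) ℍ[ℝ]) (hG : Gᴴ = G) (hM : Mᴴ = M)
    (hGpd : ∀ x : Fin n → ℍ[ℝ], x ≠ 0 → 0 < (star x ⬝ᵥ G *ᵥ x).re)
    (hMpd : ∀ x : Fin n → ℍ[ℝ], x ≠ 0 → 0 < (star x ⬝ᵥ M *ᵥ x).re)
    [Invertible M]
    (X : Matrix (Fin n) (Fin p) ℍ[ℝ]) (hX : Xᴴ * G * X = 1)
    (Y : Matrix (Fin n) (Fin p) ℍ[ℝ])
    (S : Matrix (Fin p) (Fin p) ℍ[ℝ]) (hSherm : Sᴴ = S)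
    (hS : her (Xᴴ * G * ⅟M * G * X * S) = her (Xᴴ * G * Y))
    (Z : Matrix (Fin n) (Fin p) ℍ[ℝ]) (hZ : Z = Y - ⅟M * G * X * S) :
    Zᴴ * G * X + Xᴴ * G * Z = 0 ∧
      ∀ ξ : Matrix (Fin n) (Fin p) ℍ[ℝ], ξᴴ * G * X + Xᴴ * G * ξ = 0 →
        ((ξᴴ * (M * (Y - Z))).trace).re = 0 :=
  projection_generalized_quaternionic_stiefel_general n p G M hG X Y S hSherm hS Z hZ
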